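/- arXiv:1908.00525 — 2 statements merged into one kernel-verified Lean document; each statement's English description precedes it below -/
import Mathlib

section
/- For real numbers $0 < a_1 < a_2$ and $l > 0$, one has $(a_2 + a_1)^{-l} + (a_2 - a_1)^{-l} \geq 2 a_2^{-l} + l(l+1) a_1^2 a_2^{-l-2}$. -/
open Real Set

/-- AM-GM step: if `x * y ≤ a * a` then `2 * a ^ (-q) ≤ x ^ (-q) + y ^ (-q)`. -/
lemma key_amgm {a q x y : ℝ} (ha : 0 < a) (hq : 0 ≤ q) (hx : 0 < x) (hy : 0 < y)
    (hxy : x * y ≤ a * a) : 2 * a ^ (-q) ≤ x ^ (-q) + y ^ (-q) := by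
  set u := x ^ (-(q / 2)) with hu_def
  set v := y ^ (-(q / 2)) with hv_def
  have hu : 0 < u := Real.rpow_pos_of_pos hx _
  have hv : 0 < v := Real.rpow_pos_of_pos hy _
  have huv : a ^ (-q) ≤ u * v := by
    rw [hu_def, hv_def, ← Real.mul_rpow hx.le hy.le]
    have h2 : (a * a) ^ (-(q / 2)) ≤ (x * y) ^ (-(q / 2)) :=
      Real.rpow_le_rpow_of_nonpos (mul_pos hx hy) hxy (by linarith)
    have h3 : (a * a) ^ (-(q / 2)) = a ^ (-q) := by
      rw [show a * a = a ^ (2 : ℕ) from (pow_two a).symm, ← Real.rpow_natCast a 2,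
        ← Real.rpow_mul ha.le, show ((2 : ℕ) : ℝ) * -(q / 2) = -q by push_cast; ring]
    rw [← h3]
    exact h2
  have hsq : x ^ (-q) = u ^ 2 := by
    rw [hu_def, ← Real.rpow_natCast (x ^ (-(q / 2))) 2, ← Real.rpow_mul hx.le,
      show (-(q / 2)) * ((2 : ℕ) : ℝ) = -q by push_cast; ring]
  have hsq' : y ^ (-q) = v ^ 2 := by
    rw [hv_def, ← Real.rpow_natCast (y ^ (-(q / 2))) 2, ← Real.rpow_mul hy.le,
      show (-(q / 2)) * ((2 : ℕ) : ℝ) = -q by push_cast; ring]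
  rw [hsq, hsq']
  nlinarith [two_mul_le_add_sq u v]

/-- If `f` has derivative `f'` on `[b, c]` and `f'` is nonnegative there,
then `f b ≤ f c`. -/
lemma mono_aux {f f' : ℝ → ℝ} {b c : ℝ} (hbc : b ≤ c)
    (hd : ∀ t ∈ Icc b c, HasDerivAt f (f' t) t)
    (h0 : ∀ t ∈ Icc b c, 0 ≤ f' t) : f b ≤ f c := by
  have hmono : MonotoneOn f (Icc b c) := by
    apply monotoneOn_of_deriv_nonneg (convex_Icc b c)
    · exact fun t ht => (hd t ht).continuousAt.continuousWithinAt
    · exact fun t ht => ((hd t (interior_subset ht)).differentiableAt).differentiableWithinAt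
    · intro t ht
      rw [(hd t (interior_subset ht)).deriv]
      exact h0 t (interior_subset ht)
  exact hmono (left_mem_Icc.mpr hbc) (right_mem_Icc.mpr hbc) hbc

theorem elementary_inequality_one (a₁ a₂ l : ℝ) (h₁ : 0 < a₁) (h₂ : a₁ < a₂) (hl : 0 < l) :
    (a₂ + a₁) ^ (-l) + (a₂ - a₁) ^ (-l) ≥ 2 * a₂ ^ (-l) + l * (l + 1) * a₁ ^ 2 * a₂ ^ (-l - 2) := by
  have ha : (0:ℝ) < a₂ := h₁.trans h₂
  set g : ℝ → ℝ := fun t =>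
    (a₂ + t) ^ (-l) + (a₂ - t) ^ (-l) - 2 * a₂ ^ (-l) - l * (l + 1) * a₂ ^ (-l - 2) * t ^ 2
    with hg_def
  set g' : ℝ → ℝ := fun t =>
    -l * (a₂ + t) ^ (-l - 1) + l * (a₂ - t) ^ (-l - 1) - 2 * l * (l + 1) * a₂ ^ (-l - 2) * t
    with hg'_def
  set g'' : ℝ → ℝ := fun t =>
    l * (l + 1) * (a₂ + t) ^ (-l - 2) + l * (l + 1) * (a₂ - t) ^ (-l - 2)
      - 2 * l * (l + 1) * a₂ ^ (-l - 2)
    with hg''_def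
  have hpos : ∀ t ∈ Icc (0:ℝ) a₁, 0 < a₂ + t ∧ 0 < a₂ - t := by
    intro t ht
    constructor <;> nlinarith [ht.1, ht.2]
  -- derivative of g
  have hdg : ∀ t ∈ Icc (0:ℝ) a₁, HasDerivAt g (g' t) t := by
    intro t ht
    obtain ⟨hp, hm⟩ := hpos t ht
    have h1 : HasDerivAt (fun t : ℝ => a₂ + t) 1 t := (hasDerivAt_id t).const_add a₂
    have h2 : HasDerivAt (fun t : ℝ => a₂ - t) (-1) t := (hasDerivAt_id t).const_sub a₂
    have d1 : HasDerivAt (fun t : ℝ => (a₂ + t) ^ (-l)) (-l * (a₂ + t) ^ (-l - 1)) t := by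
      have := (Real.hasDerivAt_rpow_const (p := -l) (Or.inl hp.ne')).comp t h1
      exact this.congr_deriv (by ring)
    have d2 : HasDerivAt (fun t : ℝ => (a₂ - t) ^ (-l)) (l * (a₂ - t) ^ (-l - 1)) t := by
      have := (Real.hasDerivAt_rpow_const (p := -l) (Or.inl hm.ne')).comp t h2
      exact this.congr_deriv (by ring)
    have d3 : HasDerivAt (fun t : ℝ => l * (l + 1) * a₂ ^ (-l - 2) * t ^ 2)
        (2 * l * (l + 1) * a₂ ^ (-l - 2) * t) t := by
      have := ((hasDerivAt_pow 2 t).const_mul (l * (l + 1) * a₂ ^ (-l - 2)))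
      exact this.congr_deriv (by ring)
    have := ((d1.add d2).sub_const (2 * a₂ ^ (-l))).sub d3
    exact this
  -- derivative of g'
  have hdg' : ∀ t ∈ Icc (0:ℝ) a₁, HasDerivAt g' (g'' t) t := by
    intro t ht
    obtain ⟨hp, hm⟩ := hpos t ht
    have h1 : HasDerivAt (fun t : ℝ => a₂ + t) 1 t := (hasDerivAt_id t).const_add a₂
    have h2 : HasDerivAt (fun t : ℝ => a₂ - t) (-1) t := (hasDerivAt_id t).const_sub a₂
    have d1 : HasDerivAt (fun t : ℝ => -l * (a₂ + t) ^ (-l - 1))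
        (l * (l + 1) * (a₂ + t) ^ (-l - 2)) t := by
      have := (((Real.hasDerivAt_rpow_const (p := -l - 1) (Or.inl hp.ne')).comp t
        h1).const_mul (-l))
      rw [show (-l - 1 - 1 : ℝ) = -l - 2 by ring] at this
      exact this.congr_deriv (by ring)
    have d2 : HasDerivAt (fun t : ℝ => l * (a₂ - t) ^ (-l - 1))
        (l * (l + 1) * (a₂ - t) ^ (-l - 2)) t := by
      have := (((Real.hasDerivAt_rpow_const (p := -l - 1) (Or.inl hm.ne')).comp t
        h2).const_mul l)
      rw [show (-l - 1 - 1 : ℝ) = -l - 2 by ring] at this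
      exact this.congr_deriv (by ring)
    have d3 : HasDerivAt (fun t : ℝ => 2 * l * (l + 1) * a₂ ^ (-l - 2) * t)
        (2 * l * (l + 1) * a₂ ^ (-l - 2)) t := by
      simpa using (hasDerivAt_id t).const_mul (2 * l * (l + 1) * a₂ ^ (-l - 2))
    have := (d1.add d2).sub d3
    exact this
  -- g'' is nonneg
  have hg''nonneg : ∀ t ∈ Icc (0:ℝ) a₁, 0 ≤ g'' t := by
    intro t ht
    obtain ⟨hp, hm⟩ := hpos t ht
    have hxy : (a₂ + t) * (a₂ - t) ≤ a₂ * a₂ := by nlinarith [sq_nonneg t]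
    have key := key_amgm (q := l + 2) ha (by linarith) hp hm hxy
    have he : -(l + 2) = -l - 2 := by ring
    rw [he] at key
    have hl1 : 0 < l * (l + 1) := by nlinarith
    simp only [hg''_def]
    nlinarith
  -- g' is nonneg on Icc
  have hg'0 : g' 0 = 0 := by simp [hg'_def]
  have hg'nonneg : ∀ t ∈ Icc (0:ℝ) a₁, 0 ≤ g' t := by
    intro t ht
    have hsub : Icc (0:ℝ) t ⊆ Icc 0 a₁ := Icc_subset_Icc le_rfl ht.2
    have := mono_aux (f := g') (f' := g'') ht.1
      (fun s hs => hdg' s (hsub hs)) (fun s hs => hg''nonneg s (hsub hs))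
    rw [hg'0] at this
    exact this
  -- conclude
  have hfin : g 0 ≤ g a₁ := mono_aux h₁.le hdg hg'nonneg
  have hg0 : g 0 = 0 := by simp [hg_def]; ring
  rw [hg0] at hfin
  simp only [hg_def] at hfin
  linarith
end

section
/- Fix $n \geq 1$, exponents $b_1, \dots, b_n > 0$, $c = \sum_i 2/b_i$, $b_{\max} = \max_i b_i$, and $s \in (0, 4/b_{\max})$. Define $\|y\|^2 = \sum_i |y_i|^{b_i}$ and $E_{r,1} = \{ y : \sum_i y_i^2/r^{4/b_i} < 1 \}$. Then the integral $\int_{E_{1,1}} |y|^2 \, \|y\|^{-(c+s)} \, dy$ is finite, where $|y|$ is the Euclidean norm. -/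
open MeasureTheory ENNReal

private lemma euclidean_box_volume {n : ℕ} (r : Fin n → ℝ) :
    volume {y : EuclideanSpace ℝ (Fin n) | ∀ i, |y i| ≤ r i}
      = ∏ i, ENNReal.ofReal (2 * r i) := by
  have h : {y : EuclideanSpace ℝ (Fin n) | ∀ i, |y i| ≤ r i}
      = (MeasurableEquiv.toLp 2 (Fin n → ℝ)).symm ⁻¹'
        (Set.univ.pi fun i => Set.Icc (-(r i)) (r i)) := by
    ext y
    simp only [Set.mem_setOf_eq, Set.mem_preimage, Set.mem_pi, Set.mem_univ, true_implies,
      Set.mem_Icc, abs_le]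
    exact Iff.rfl
  rw [h, (EuclideanSpace.volume_preserving_symm_measurableEquiv_toLp (Fin n)).measure_preimage
    (MeasurableSet.univ_pi fun i => measurableSet_Icc).nullMeasurableSet,
    volume_pi_pi]
  congr 1 with i
  rw [Real.volume_Icc]
  ring_nf

theorem anisotropic_kernel_local_integrable
    {n : ℕ} (hn : 1 ≤ n) (b : Fin n → ℝ) (hb : ∀ i, 0 < b i)
    (bmax : ℝ) (hbmax : IsGreatest (Set.range b) bmax)
    (c : ℝ) (hc : c = ∑ i, 2 / b i) (s : ℝ) (hs : 0 < s) (hs' : s < 4 / bmax) :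
    ∫⁻ y in {y : EuclideanSpace ℝ (Fin n) | ∑ i, y i ^ 2 / (1 : ℝ) ^ (4 / b i) < 1},
        ENNReal.ofReal (‖y‖ ^ 2 * (Real.sqrt (∑ i, |y i| ^ (b i))) ^ (-(c + s))) < ⊤ := by
  classical
  obtain ⟨i0, hi0⟩ := hbmax.1
  have hbmax_pos : 0 < bmax := hi0 ▸ hb i0
  have hcpos : 0 < c := by
    rw [hc]
    exact Finset.sum_pos (fun i _ => div_pos two_pos (hb i)) ⟨⟨0, hn⟩, Finset.mem_univ _⟩
  have hcs : 0 < c + s := by linarith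
  set E := EuclideanSpace ℝ (Fin n)
  set ρ : E → ℝ := fun y => Real.sqrt (∑ i, |y i| ^ b i) with hρdef
  set f : E → ℝ≥0∞ := fun y => ENNReal.ofReal (‖y‖ ^ 2 * ρ y ^ (-(c + s))) with hfdef
  have hρ_nonneg : ∀ y, 0 ≤ ρ y := fun y => Real.sqrt_nonneg _
  have hsum_nonneg : ∀ y : E, 0 ≤ ∑ i, |y i| ^ b i := fun y =>
    Finset.sum_nonneg fun i _ => Real.rpow_nonneg (abs_nonneg _) _
  have hρ_cont : Continuous ρ :=
    Real.continuous_sqrt.comp <| continuous_finset_sum _ fun i _ =>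
      ((EuclideanSpace.proj i : E →L[ℝ] ℝ).continuous.abs).rpow_const
        (fun y => Or.inr (hb i).le)
  have hρ_sq : ∀ y : E, ρ y ^ 2 = ∑ i, |y i| ^ b i := fun y =>
    Real.sq_sqrt (hsum_nonneg y)
  -- the domain
  set D := {y : E | ∑ i, y i ^ 2 / (1 : ℝ) ^ (4 / b i) < 1} with hDdef
  have hnormsq : ∀ y : E, ‖y‖ ^ 2 = ∑ i, y i ^ 2 := by
    intro y
    rw [EuclideanSpace.norm_eq, Real.sq_sqrt (Finset.sum_nonneg fun i _ => sq_nonneg _)]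
    simp [Real.norm_eq_abs, sq_abs]
  have hD_ball : D ⊆ Metric.ball (0 : E) 1 := by
    intro y hy
    simp only [hDdef, Set.mem_setOf_eq, Real.one_rpow, div_one] at hy
    rw [Metric.mem_ball, dist_zero_right]
    nlinarith [hnormsq y, norm_nonneg y]
  -- pieces
  set A0 : Set E := {y | ρ y = 0} with hA0def
  set A1 : Set E := Metric.ball (0 : E) 1 ∩ {y | 1 ≤ ρ y} with hA1def
  set S : ℕ → Set E := fun m => {y | (1/2 : ℝ) ^ (m + 1) < ρ y ∧ ρ y ≤ (1/2 : ℝ) ^ m}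
    with hSdef
  have hcover : D ⊆ (A0 ∪ A1) ∪ ⋃ m, S m := by
    intro y hy
    rcases eq_or_lt_of_le (hρ_nonneg y) with h0 | h0
    · exact Or.inl (Or.inl h0.symm)
    rcases le_or_gt 1 (ρ y) with h1 | h1
    · exact Or.inl (Or.inr ⟨hD_ball hy, h1⟩)
    · have hex : ∃ k, (1/2 : ℝ) ^ k < ρ y := exists_pow_lt_of_lt_one h0 (by norm_num)
      have hk0 : (1/2 : ℝ) ^ Nat.find hex < ρ y := Nat.find_spec hex
      have hne : Nat.find hex ≠ 0 := by
        intro h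
        rw [h, pow_zero] at hk0
        linarith
      obtain ⟨m, hm⟩ := Nat.exists_eq_succ_of_ne_zero hne
      refine Or.inr (Set.mem_iUnion.2 ⟨m, ?_, ?_⟩)
      · rw [← Nat.succ_eq_add_one, ← hm]; exact hk0
      · have := Nat.find_min hex (m := m) (by omega)
        push_neg at this
        exact this
  have key : ∫⁻ y in D, f y ≤
      ((∫⁻ y in A0, f y) + (∫⁻ y in A1, f y)) + ∑' m, ∫⁻ y in S m, f y := by
    refine le_trans (lintegral_mono_set hcover) ?_
    refine le_trans (lintegral_union_le _ _ _) ?_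
    exact add_le_add (lintegral_union_le _ _ _) (lintegral_iUnion_le _ _)
  -- piece A0
  have hA0 : ∫⁻ y in A0, f y = 0 := by
    have hms : MeasurableSet A0 := (isClosed_singleton.preimage hρ_cont).measurableSet
    rw [setLIntegral_congr_fun hms (fun y hy => ?_),
      lintegral_zero]
    show ENNReal.ofReal (‖y‖ ^ 2 * ρ y ^ (-(c + s))) = (0 : ℝ≥0∞)
    rw [hy, Real.zero_rpow (by linarith), mul_zero, ENNReal.ofReal_zero]
  -- piece A1
  have hA1 : ∫⁻ y in A1, f y ≤ volume (Metric.ball (0 : E) 1) := by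
    calc ∫⁻ y in A1, f y ≤ ∫⁻ _ in A1, 1 := by
          refine setLIntegral_mono measurable_const fun y hy => ?_
          refine ENNReal.ofReal_le_one.2 ?_
          have h1 : ‖y‖ ^ 2 ≤ 1 := by
            have := Metric.mem_ball.1 hy.1
            rw [dist_zero_right] at this
            nlinarith [norm_nonneg y]
          have h2 : ρ y ^ (-(c + s)) ≤ 1 :=
            Real.rpow_le_one_of_one_le_of_nonpos hy.2 (by linarith)
          calc ‖y‖ ^ 2 * ρ y ^ (-(c + s)) ≤ 1 * 1 :=
                mul_le_mul h1 h2 (Real.rpow_nonneg (hρ_nonneg y) _) one_pos.le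
            _ = 1 := one_mul 1
      _ = volume A1 := setLIntegral_one A1
      _ ≤ volume (Metric.ball (0 : E) 1) := measure_mono Set.inter_subset_left
  have hA1' : ∫⁻ y in A1, f y < ⊤ := lt_of_le_of_lt hA1 measure_ball_lt_top

  -- shell pieces
  have hble : ∀ i, b i ≤ bmax := fun i => hbmax.2 ⟨i, rfl⟩
  have hhalf : (0:ℝ) < 1/2 := by norm_num
  set C : ℝ≥0∞ := ENNReal.ofReal ((n:ℝ) * 2^n * (1/2:ℝ) ^ (-(c+s))) with hCdef
  set q : ℝ≥0∞ := ENNReal.ofReal ((1/2:ℝ) ^ (4/bmax - s)) with hqdef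
  have hshell : ∀ m : ℕ, ∫⁻ y in S m, f y ≤ C * q ^ m := by
    intro m
    set r : Fin n → ℝ := fun i => (1/2:ℝ) ^ ((m:ℝ) * (2 / b i)) with hrdef
    have hr_nonneg : ∀ i, 0 ≤ r i := fun i => Real.rpow_nonneg hhalf.le _
    have habs : ∀ y ∈ S m, ∀ i, |y i| ≤ r i := by
      intro y hy i
      have hterm : |y i| ^ b i ≤ ((1/2:ℝ) ^ m) ^ 2 := by
        calc |y i| ^ b i ≤ ∑ j, |y j| ^ b j :=
              Finset.single_le_sum (fun j _ => Real.rpow_nonneg (abs_nonneg _) _)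
                (Finset.mem_univ i)
          _ = ρ y ^ 2 := (hρ_sq y).symm
          _ ≤ ((1/2:ℝ) ^ m) ^ 2 := pow_le_pow_left₀ (hρ_nonneg y) hy.2 2
      have h1 : |y i| = (|y i| ^ b i) ^ (b i)⁻¹ :=
        (Real.rpow_rpow_inv (abs_nonneg _) (hb i).ne').symm
      rw [h1]
      calc (|y i| ^ b i) ^ (b i)⁻¹ ≤ (((1/2:ℝ) ^ m) ^ 2) ^ (b i)⁻¹ :=
            Real.rpow_le_rpow (Real.rpow_nonneg (abs_nonneg _) _) hterm
              (inv_nonneg.2 (hb i).le)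
        _ = r i := by
            rw [hrdef, ← Real.rpow_natCast ((1/2:ℝ) ^ m) 2, ← Real.rpow_natCast (1/2:ℝ) m,
              ← Real.rpow_mul hhalf.le, ← Real.rpow_mul hhalf.le]
            congr 1
            push_cast
            field_simp
    have hS_sub : S m ⊆ {y : E | ∀ i, |y i| ≤ r i} := fun y hy i => habs y hy i
    have hpt : ∀ y ∈ S m, f y ≤
        ENNReal.ofReal ((n:ℝ) * (1/2:ℝ) ^ ((m:ℝ) * (4/bmax))
          * (1/2:ℝ) ^ (((m:ℝ)+1) * (-(c+s)))) := by
      intro y hy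
      refine ENNReal.ofReal_le_ofReal ?_
      have hnsq : ‖y‖ ^ 2 ≤ (n:ℝ) * (1/2:ℝ) ^ ((m:ℝ) * (4/bmax)) := by
        rw [hnormsq y]
        have hterm : ∀ i, y i ^ 2 ≤ (1/2:ℝ) ^ ((m:ℝ) * (4/bmax)) := by
          intro i
          have h2 : |y i| ≤ (1/2:ℝ) ^ ((m:ℝ) * (2 / bmax)) := by
            refine (habs y hy i).trans ?_
            refine Real.rpow_le_rpow_of_exponent_ge hhalf (by norm_num) ?_
            have : 2 / bmax ≤ 2 / b i :=
              div_le_div_of_nonneg_left (by norm_num) (hb i) (hble i)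
            exact mul_le_mul_of_nonneg_left this (Nat.cast_nonneg m)
          calc y i ^ 2 = |y i| ^ 2 := (sq_abs _).symm
            _ ≤ ((1/2:ℝ) ^ ((m:ℝ) * (2 / bmax))) ^ 2 :=
              pow_le_pow_left₀ (abs_nonneg _) h2 2
            _ = (1/2:ℝ) ^ ((m:ℝ) * (4/bmax)) := by
              rw [← Real.rpow_natCast ((1/2:ℝ) ^ ((m:ℝ) * (2 / bmax))) 2,
                ← Real.rpow_mul hhalf.le]
              congr 1
              push_cast
              ring
        calc ∑ i, y i ^ 2 ≤ ∑ _i : Fin n, (1/2:ℝ) ^ ((m:ℝ) * (4/bmax)) :=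
              Finset.sum_le_sum fun i _ => hterm i
          _ = (n:ℝ) * (1/2:ℝ) ^ ((m:ℝ) * (4/bmax)) := by
              rw [Finset.sum_const, Finset.card_univ, Fintype.card_fin, nsmul_eq_mul]
      have hrpow : ρ y ^ (-(c+s)) ≤ (1/2:ℝ) ^ (((m:ℝ)+1) * (-(c+s))) := by
        have := Real.rpow_le_rpow_of_nonpos (pow_pos hhalf (m+1)) hy.1.le
          (by linarith : -(c+s) ≤ 0)
        refine this.trans_eq ?_
        rw [← Real.rpow_natCast (1/2:ℝ) (m+1), ← Real.rpow_mul hhalf.le]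
        congr 1
        push_cast
        ring
      exact mul_le_mul hnsq hrpow (Real.rpow_nonneg (hρ_nonneg y) _)
        (by positivity)
    have hmeas : MeasurableSet (S m) :=
      (hρ_cont.measurable measurableSet_Ioc : MeasurableSet (ρ ⁻¹' Set.Ioc _ _))
    calc ∫⁻ y in S m, f y
        ≤ ∫⁻ _ in S m, ENNReal.ofReal ((n:ℝ) * (1/2:ℝ) ^ ((m:ℝ) * (4/bmax))
            * (1/2:ℝ) ^ (((m:ℝ)+1) * (-(c+s)))) :=
          setLIntegral_mono measurable_const hpt
      _ = ENNReal.ofReal ((n:ℝ) * (1/2:ℝ) ^ ((m:ℝ) * (4/bmax))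
            * (1/2:ℝ) ^ (((m:ℝ)+1) * (-(c+s)))) * volume (S m) :=
          setLIntegral_const _ _
      _ ≤ ENNReal.ofReal ((n:ℝ) * (1/2:ℝ) ^ ((m:ℝ) * (4/bmax))
            * (1/2:ℝ) ^ (((m:ℝ)+1) * (-(c+s)))) * ∏ i, ENNReal.ofReal (2 * r i) := by
          refine mul_le_mul_right ?_ _
          rw [← euclidean_box_volume r]
          exact measure_mono hS_sub
      _ = ENNReal.ofReal ((n:ℝ) * (1/2:ℝ) ^ ((m:ℝ) * (4/bmax))
            * (1/2:ℝ) ^ (((m:ℝ)+1) * (-(c+s))) * ∏ i, (2 * r i)) := by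
          rw [← ENNReal.ofReal_prod_of_nonneg (fun i _ => by positivity),
            ← ENNReal.ofReal_mul (by positivity)]
      _ = C * q ^ m := by
          rw [hCdef, hqdef, ← ENNReal.ofReal_pow (Real.rpow_nonneg hhalf.le _),
            ← ENNReal.ofReal_mul (by positivity)]
          congr 1
          have hprod : ∏ i, (2 * r i) = 2^n * (1/2:ℝ) ^ ((m:ℝ) * c) := by
            rw [Finset.prod_mul_distrib, Finset.prod_const, Finset.card_univ,
              Fintype.card_fin, hrdef]
            congr 1
            rw [← Real.rpow_sum_of_pos hhalf, ← Finset.mul_sum, ← hc]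
          have hq : ((1/2:ℝ) ^ (4/bmax - s)) ^ m = (1/2:ℝ) ^ ((m:ℝ) * (4/bmax - s)) := by
            rw [← Real.rpow_natCast ((1/2:ℝ) ^ (4/bmax - s)) m, ← Real.rpow_mul hhalf.le,
              mul_comm]
          rw [hprod, hq]
          calc (n:ℝ) * (1/2:ℝ) ^ ((m:ℝ) * (4/bmax)) * (1/2:ℝ) ^ (((m:ℝ)+1) * (-(c+s)))
                * (2^n * (1/2:ℝ) ^ ((m:ℝ) * c))
              = ((n:ℝ) * 2^n) * ((1/2:ℝ) ^ ((m:ℝ) * (4/bmax))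
                  * (1/2:ℝ) ^ (((m:ℝ)+1) * (-(c+s))) * (1/2:ℝ) ^ ((m:ℝ) * c)) := by ring
            _ = ((n:ℝ) * 2^n) * (1/2:ℝ) ^ ((m:ℝ) * (4/bmax) + ((m:ℝ)+1) * (-(c+s))
                  + (m:ℝ) * c) := by
                rw [← Real.rpow_add hhalf, ← Real.rpow_add hhalf]
            _ = ((n:ℝ) * 2^n) * (1/2:ℝ) ^ (-(c+s) + (m:ℝ) * (4/bmax - s)) := by
                congr 1
                ring
            _ = (n:ℝ) * 2^n * (1/2:ℝ) ^ (-(c+s)) * (1/2:ℝ) ^ ((m:ℝ) * (4/bmax - s)) := by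
                rw [Real.rpow_add hhalf]
                ring
  have hq1 : q < 1 := by
    rw [hqdef]
    exact ENNReal.ofReal_lt_one.2 (Real.rpow_lt_one hhalf.le (by norm_num)
      (by have := hs'; linarith [sub_pos.2 hs']))
  have htsum : ∑' m, ∫⁻ y in S m, f y < ⊤ := by
    calc ∑' m, ∫⁻ y in S m, f y ≤ ∑' m, C * q ^ m := ENNReal.tsum_le_tsum hshell
      _ = C * (1 - q)⁻¹ := by rw [ENNReal.tsum_mul_left, ENNReal.tsum_geometric]
      _ < ⊤ := ENNReal.mul_lt_top ENNReal.ofReal_lt_top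
          (ENNReal.inv_lt_top.2 (tsub_pos_iff_lt.2 hq1))
  calc ∫⁻ y in D, f y ≤ ((∫⁻ y in A0, f y) + (∫⁻ y in A1, f y)) + ∑' m, ∫⁻ y in S m, f y :=
        key
    _ < ⊤ := by
        rw [hA0, zero_add]
        exact ENNReal.add_lt_top.2 ⟨hA1', htsum⟩
end
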